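/- arXiv:0711.4314 — 4 statements merged into one kernel-verified Lean document; each statement's English description precedes it below -/
import Mathlib

section
/- Let A be an associative unital ring, n ≥ 2, D ≥ 1, and let K_i^μ ∈ A (i ∈ {1,…,n}, μ ∈ {0,…,D−1}) pairwise anticommute: K_i^μ K_j^ν = −K_j^ν K_i^μ for all i, j, μ, ν. With the linear chain K^{μν}_{[i_1,…,i_n]} defined as the ordered product K_{i_1}^μ (∏_{k=1}^{n−1} ∑_ρ K_{i_k}^ρ K_{i_{k+1}}^ρ) K_{i_n}^ν, the traced chain is cyclic: ∑_μ K^{μμ}_{[1,2,…,n]} = ∑_μ K^{μμ}_{[2,…,n,1]}. -/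
/-!
Each product `K_y^ρ K_z^ρ` of two anticommuting elements commutes with every `K_w^σ`, hence so
do the contractions `S_{yz} = ∑_ρ K_y^ρ K_z^ρ` and any product `P` of them. The traced chain over
`x₁ ⋯ xₙ` is `∑_μ K_{x₁}^μ P K_{xₙ}^μ`, so moving `P` to either side shows that
it equals both `P S_{x₁xₙ}` and `S_{x₁xₙ} P`. For the rotated chain over `x₂ ⋯ xₙ x₁` the
second form reads `S_{x₂x₁} P' S_{xₙx₁}` with `P = S_{x₁x₂} P'`, and the two sign flips `S_{yz} = -S_{zy}` cancel.
-/

/-- Tail of the linear-chain kinematic factor. -/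
def ktail {A X : Type*} [Ring A] {D : ℕ} (K : X → Fin D → A) (ν : Fin D) :
    X → List X → A
  | x, [] => K x ν
  | x, y :: l => (∑ ρ : Fin D, K x ρ * K y ρ) * ktail K ν y l

/-- The linear chain `K^{μν}_{[x₁⋯xₙ]}` over a (nonempty) list of points. -/
def kchain {A X : Type*} [Ring A] {D : ℕ} (K : X → Fin D → A) (μ ν : Fin D) :
    List X → A
  | [] => 0
  | x :: l => K x μ * ktail K ν x l

theorem commute_mul_of_anticomm {R : Type*} [Semigroup R] [HasDistribNeg R] {a b c : R}
    (ha : a * c = -(c * a)) (hb : b * c = -(c * b)) : Commute (a * b) c :=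
  calc a * b * c = -(a * c * b) := by rw [mul_assoc, hb, mul_neg, ← mul_assoc]
    _ = c * (a * b) := by rw [ha, neg_mul, neg_neg, mul_assoc]

section KChain

variable {A X : Type*} [Ring A] {D : ℕ} (K : X → Fin D → A)

def kdot (y z : X) : A := ∑ ρ : Fin D, K y ρ * K z ρ

def kprod : X → List X → A
  | _, [] => 1
  | x, y :: l => kdot K x y * kprod y l

def PairwiseAnticomm (s : List X) : Prop :=
  ∀ y ∈ s, ∀ z ∈ s, ∀ μ ν : Fin D, K y μ * K z ν = -(K z ν * K y μ)

variable {K}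

theorem PairwiseAnticomm.perm {s t : List X} (h : PairwiseAnticomm K s) (hst : s.Perm t) :
    PairwiseAnticomm K t :=
  fun y hy z hz => h y (hst.mem_iff.mpr hy) z (hst.mem_iff.mpr hz)

theorem kdot_swap {y z : X} (h : ∀ μ ν : Fin D, K y μ * K z ν = -(K z ν * K y μ)) :
    kdot K y z = -kdot K z y := by
  rw [kdot, kdot, ← Finset.sum_neg_distrib]
  exact Finset.sum_congr rfl fun ρ _ => h ρ ρ

theorem kdot_commute {y z w : X} (hy : ∀ μ ν : Fin D, K y μ * K w ν = -(K w ν * K y μ))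
    (hz : ∀ μ ν : Fin D, K z μ * K w ν = -(K w ν * K z μ)) (σ : Fin D) :
    Commute (kdot K y z) (K w σ) :=
  Commute.sum_left _ _ _ fun ρ _ => commute_mul_of_anticomm (hy ρ σ) (hz ρ σ)

theorem kprod_commute {x w : X} {l : List X}
    (h : ∀ a ∈ x :: l, ∀ μ ν : Fin D, K a μ * K w ν = -(K w ν * K a μ)) (σ : Fin D) :
    Commute (kprod K x l) (K w σ) := by
  induction l generalizing x with
  | nil => exact Commute.one_left _
  | cons y l ih =>
    exact (kdot_commute (h x (by simp)) (h y (by simp)) σ).mul_left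
      (ih fun a ha => h a (List.mem_cons_of_mem x ha))

theorem ktail_eq_kprod_mul (ν : Fin D) (x : X) (l : List X) :
    ktail K ν x l = kprod K x l * K (l.getLastD x) ν := by
  induction l generalizing x with
  | nil => exact (one_mul _).symm
  | cons y l ih => rw [ktail, ih, kprod, List.getLastD_cons, mul_assoc, kdot]

theorem kprod_concat (y x : X) (m : List X) :
    kprod K y (m ++ [x]) = kprod K y m * kdot K (m.getLastD y) x := by
  induction m generalizing y with
  | nil => simp [kprod]
  | cons z m ih => rw [List.cons_append, kprod, ih, kprod, List.getLastD_cons, mul_assoc]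

theorem sum_kchain_cons_eq_kprod_mul {x : X} {l : List X} (h : PairwiseAnticomm K (x :: l)) :
    ∑ μ : Fin D, kchain K μ μ (x :: l) = kprod K x l * kdot K x (l.getLastD x) := by
  have hP := kprod_commute fun a ha => h a ha x List.mem_cons_self
  simp only [kchain, ktail_eq_kprod_mul, kdot, Finset.mul_sum]
  exact Finset.sum_congr rfl fun μ _ => (hP μ).symm.left_comm _

theorem sum_kchain_cons_eq_kdot_mul {x : X} {l : List X} (h : PairwiseAnticomm K (x :: l)) :
    ∑ μ : Fin D, kchain K μ μ (x :: l) = kdot K x (l.getLastD x) * kprod K x l := by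
  have hP := kprod_commute fun a ha => h a ha (l.getLastD x) List.getLastD_mem_cons
  simp only [kchain, ktail_eq_kprod_mul, kdot, Finset.sum_mul]
  exact Finset.sum_congr rfl fun μ _ => by rw [(hP μ).eq, mul_assoc]

end KChain

theorem kchain_trace_cyclic_general (A X : Type*) [Ring A] (D : ℕ)
    (K : X → Fin D → A) (x : X) (l : List X)
    (hanti : ∀ y ∈ x :: l, ∀ z ∈ x :: l, ∀ μ ν : Fin D,
      K y μ * K z ν = -(K z ν * K y μ)) :
    ∑ μ : Fin D, kchain K μ μ (x :: l) = ∑ μ : Fin D, kchain K μ μ (l ++ [x]) := by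
  cases l with
  | nil => rfl
  | cons y m =>
    have hrot : PairwiseAnticomm K (y :: (m ++ [x])) :=
      PairwiseAnticomm.perm hanti (List.perm_append_comm (l₁ := [x]) (l₂ := y :: m))
    have hx : x ∈ x :: y :: m := List.mem_cons_self
    rw [sum_kchain_cons_eq_kprod_mul hanti, List.cons_append, sum_kchain_cons_eq_kdot_mul hrot,
      List.getLastD_concat, kprod_concat, kprod, List.getLastD_cons,
      kdot_swap (hanti y (by simp) x hx),
      kdot_swap (hanti (m.getLastD y) (List.mem_cons_of_mem x List.getLastD_mem_cons) x hx)]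
    simp only [neg_mul, mul_neg, neg_neg, mul_assoc]

/-- cyclicity of the traced chain
`∑_μ K^{μμ}_{[1,2,…,n]} = ∑_μ K^{μμ}_{[2,…,n,1]}` (n ≥ 2) for pairwise
anticommuting `K_i^μ`. -/
theorem kchain_trace_cyclic (A X : Type*) [Ring A] (D : ℕ) (hD : 1 ≤ D)
    (K : X → Fin D → A) (x : X) (l : List X) (hl : l ≠ [])
    (hanti : ∀ y ∈ x :: l, ∀ z ∈ x :: l, ∀ μ ν : Fin D,
      K y μ * K z ν = -(K z ν * K y μ)) :
    ∑ μ : Fin D, kchain K μ μ (x :: l) = ∑ μ : Fin D, kchain K μ μ (l ++ [x]) :=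
  kchain_trace_cyclic_general A X D K x l hanti
end

section
/- Let A be an associative unital ℂ-algebra, D ≥ 1, and let K_r^μ, K_s^μ ∈ A (μ ∈ {0,…,D−1}) be elements such that all of them pairwise anticommute (K_x^μ K_y^ν = −K_y^ν K_x^μ for x,y ∈ {r,s} and all μ,ν), and let k_s ∈ ℂ^D satisfy the Bianchi identity at s: k_s^μ K_s^ν K_s^ρ + k_s^ν K_s^ρ K_s^μ + k_s^ρ K_s^μ K_s^ν = 0 for all μ, ν, ρ. Then ∑_{μ,σ} k_s^μ K_r^μ K_r^σ K_s^σ K_s^ρ = (1/2) (∑_{μ,σ} K_r^μ K_r^σ K_s^σ K_s^μ) · k_s^ρ for every ρ. -/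
/-!
Contracting the Bianchi identity at `s` with `K_r^μ K_r^σ` writes the left-hand side `L` as
`k_s^ρ • ∑ K_r^μ K_r^σ K_s^σ K_s^μ` minus a cross term. Relabelling `μ ↔ σ` in the cross term
costs two signs, one from each of `K_r^σ K_r^μ = -K_r^μ K_r^σ` and `K_s^ρ K_s^σ = -K_s^σ K_s^ρ`,
so the cross term equals `L`, and `L` is half of the first term.
-/

open Finset

theorem eq_one_div_two_smul_of_eq_sub_self {K M : Type*} [DivisionRing K] [NeZero (2 : K)]
    [AddCommGroup M] [Module K M] {x y : M} (h : x = y - x) : x = ((1 : K) / 2) • y := by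
  have h2 : (2 : K) • x = y := by
    rw [two_smul]
    exact eq_sub_iff_add_eq.mp h
  rw [← h2, smul_smul, one_div_mul_cancel two_ne_zero, one_smul]

theorem smul_mul_eq_of_bianchi {R A ι : Type*} [Semiring R] [Ring A] [Module R A]
    {K : ι → A} {k : ι → R} (hK : ∀ μ ν, K μ * K ν = -(K ν * K μ))
    (hbianchi : ∀ μ ν ρ, k μ • (K ν * K ρ) + k ν • (K ρ * K μ) + k ρ • (K μ * K ν) = 0)
    (μ σ ρ : ι) :
    k μ • (K σ * K ρ) = k ρ • (K σ * K μ) - k σ • (K ρ * K μ) := by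
  have h := hbianchi μ σ ρ
  rw [hK μ σ, smul_neg] at h
  rw [← sub_eq_zero, ← h]
  abel

theorem sum_smul_mul_mul_eq_of_bianchi {R A ι : Type*} [CommSemiring R] [Ring A] [Algebra R A]
    [Fintype ι] {K : ι → A} {k : ι → R} (P : ι → ι → A) (hK : ∀ μ ν, K μ * K ν = -(K ν * K μ))
    (hbianchi : ∀ μ ν ρ, k μ • (K ν * K ρ) + k ν • (K ρ * K μ) + k ρ • (K μ * K ν) = 0)
    (ρ : ι) :
    ∑ μ, ∑ σ, k μ • (P μ σ * K σ * K ρ)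
      = k ρ • ∑ μ, ∑ σ, P μ σ * K σ * K μ - ∑ μ, ∑ σ, k σ • (P μ σ * K ρ * K μ) := by
  have hterm : ∀ μ σ, k μ • (P μ σ * K σ * K ρ)
      = k ρ • (P μ σ * K σ * K μ) - k σ • (P μ σ * K ρ * K μ) := fun μ σ => by
    simp only [mul_assoc, ← mul_smul_comm, smul_mul_eq_of_bianchi hK hbianchi μ σ ρ, mul_sub]
  simp only [hterm, sum_sub_distrib, smul_sum]

theorem sum_smul_mul_mul_comm_of_antisymm {R A ι : Type*} [Semiring R] [Ring A] [Module R A]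
    [Fintype ι] {K : ι → A} {k : ι → R} {P : ι → ι → A} (hP : ∀ μ σ, P σ μ = -P μ σ)
    (hK : ∀ μ ν, K μ * K ν = -(K ν * K μ)) (ρ : ι) :
    ∑ μ, ∑ σ, k σ • (P μ σ * K ρ * K μ) = ∑ μ, ∑ σ, k μ • (P μ σ * K σ * K ρ) := by
  rw [sum_comm]
  refine sum_congr rfl fun μ _ => sum_congr rfl fun σ _ => ?_
  rw [hP, mul_assoc, hK, neg_mul_neg, mul_assoc]

theorem kchain_two_point_contraction_general (A : Type*) [Ring A] [Algebra ℂ A]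
    (D : ℕ) (Kr Ks : Fin D → A)
    (hrr : ∀ μ ν : Fin D, Kr μ * Kr ν = -(Kr ν * Kr μ))
    (hss : ∀ μ ν : Fin D, Ks μ * Ks ν = -(Ks ν * Ks μ))
    (ks : Fin D → ℂ)
    (hbianchi : ∀ μ ν ρ : Fin D,
      ks μ • (Ks ν * Ks ρ) + ks ν • (Ks ρ * Ks μ) + ks ρ • (Ks μ * Ks ν) = 0) :
    ∀ ρ : Fin D,
      ∑ μ : Fin D, ∑ σ : Fin D, ks μ • (Kr μ * Kr σ * Ks σ * Ks ρ)
        = ((1 : ℂ) / 2) • (ks ρ • ∑ μ : Fin D, ∑ σ : Fin D,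
            Kr μ * Kr σ * Ks σ * Ks μ) := by
  intro ρ
  have h := sum_smul_mul_mul_eq_of_bianchi (fun μ σ => Kr μ * Kr σ) hss hbianchi ρ
  rw [sum_smul_mul_mul_comm_of_antisymm (fun μ σ => hrr σ μ) hss] at h
  exact eq_one_div_two_smul_of_eq_sub_self h

/-- two-point contraction identity
`∑_{μ,σ} k_s^μ K_r^μ K_r^σ K_s^σ K_s^ρ = ½ (∑_{μ,σ} K_r^μ K_r^σ K_s^σ K_s^μ) k_s^ρ`,
from pairwise anticommutativity and the Bianchi identity at `s`. -/
theorem kchain_two_point_contraction (A : Type*) [Ring A] [Algebra ℂ A]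
    (D : ℕ) (hD : 1 ≤ D) (Kr Ks : Fin D → A)
    (hrr : ∀ μ ν : Fin D, Kr μ * Kr ν = -(Kr ν * Kr μ))
    (hrs : ∀ μ ν : Fin D, Kr μ * Ks ν = -(Ks ν * Kr μ))
    (hsr : ∀ μ ν : Fin D, Ks μ * Kr ν = -(Kr ν * Ks μ))
    (hss : ∀ μ ν : Fin D, Ks μ * Ks ν = -(Ks ν * Ks μ))
    (ks : Fin D → ℂ)
    (hbianchi : ∀ μ ν ρ : Fin D,
      ks μ • (Ks ν * Ks ρ) + ks ν • (Ks ρ * Ks μ) + ks ρ • (Ks μ * Ks ν) = 0) :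
    ∀ ρ : Fin D,
      ∑ μ : Fin D, ∑ σ : Fin D, ks μ • (Kr μ * Kr σ * Ks σ * Ks ρ)
        = ((1 : ℂ) / 2) • (ks ρ • ∑ μ : Fin D, ∑ σ : Fin D,
            Kr μ * Kr σ * Ks σ * Ks μ) :=
  kchain_two_point_contraction_general A D Kr Ks hrr hss ks hbianchi
end

section
/- Let A be an associative unital ℂ-algebra and let K_x^μ ∈ A, for points x ∈ {t_1,…,t_m, r, u_1,…,u_ℓ} (m ≥ 1, ℓ ≥ 1) and μ ∈ {0,…,D−1}, be pairwise anticommuting (K_x^μ K_y^ν = −K_y^ν K_x^μ for all points x,y and all μ,ν). Let k_r ∈ ℂ^D satisfy the Bianchi identity at r: k_r^μ K_r^ν K_r^ρ + k_r^ν K_r^ρ K_r^μ + k_r^ρ K_r^μ K_r^ν = 0 for all μ,ν,ρ. Writing K^{μν}_{[x_1,…,x_n]} for the ordered chain K_{x_1}^μ (∏_{k=1}^{n−1} ∑_ρ K_{x_k}^ρ K_{x_{k+1}}^ρ) K_{x_n}^ν, one has the antisymmetrization identity: ∑_ρ K^{μρ}_{[t_1⋯t_m, r, u_1⋯u_ℓ]}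 k_r^ρ − (−1)^ℓ ∑_ρ K^{μρ}_{[t_1⋯t_m, r, u_ℓ⋯u_1]} k_r^ρ = (∑_ρ K^{μρ}_{[t_1⋯t_m]} k_r^ρ) · (∑_σ K^{σσ}_{[r, u_1⋯u_ℓ]}). -/
/-!
A chain over `x₁ ⋯ xₙ` is `K x₁ μ * L * K xₙ ν`, where `L` is the product of the links
`link x y = ∑ ρ, K x ρ * K y ρ` along the chain. Links are even, so they commute with every `K`,
and each link is antisymmetric; reversing `u₁ ⋯ u_ℓ` therefore only costs the sign
`(-1)^(ℓ-1)`, and the trace `∑ σ, K^{σσ}_{[r u₁⋯u_ℓ]}` closes the loop with the link `r u_ℓ`.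
Both sides then share the prefix `K t₁ μ * L_t` and the even factor `L_u`, and what remains,
with `κ x = ∑ ρ, k ρ • K x ρ`, `a = tₘ`, `b = u₁`, `c = u_ℓ`, is
`link a r * link r b * κ c + link a r * link r c * κ b = κ a * link r b * link r c`:
the Bianchi identity at `r` contracted with `K a`, `K b` and `K c`.
-/

namespace KChain

variable {A X : Type*} [Ring A] {D : ℕ} (K : X → Fin D → A)

def link (x y : X) : A := ∑ ρ : Fin D, K x ρ * K y ρ

def linkProd : List X → A
  | [] => 1
  | [_] => 1
  | x :: y :: l => link K x y * linkProd (y :: l)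

def contract {R : Type*} [CommSemiring R] [Algebra R A] (k : Fin D → R) (x : X) : A :=
  ∑ ρ : Fin D, k ρ • K x ρ

def AnticommuteOn (S : List X) : Prop :=
  ∀ x ∈ S, ∀ y ∈ S, ∀ μ ν : Fin D, K x μ * K y ν = -(K y ν * K x μ)

theorem ktail_cons (ν : Fin D) (x y : X) (l : List X) :
    ktail K ν x (y :: l) = link K x y * ktail K ν y l :=
  rfl

theorem linkProd_cons_cons (x y : X) (l : List X) :
    linkProd K (x :: y :: l) = link K x y * linkProd K (y :: l) :=
  rfl

theorem linkProd_cons_of_ne_nil (x : X) {v : List X} (hv : v ≠ []) :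
    linkProd K (x :: v) = link K x (v.head hv) * linkProd K v := by
  obtain ⟨y, l, rfl⟩ := List.exists_cons_of_ne_nil hv
  rfl

theorem linkProd_append_cons {v : List X} (hv : v ≠ []) (y : X) (w : List X) :
    linkProd K (v ++ y :: w) = linkProd K v * link K (v.getLast hv) y * linkProd K (y :: w) := by
  induction v with
  | nil => exact absurd rfl hv
  | cons x l ih =>
    rcases l with _ | ⟨x', l⟩
    · simp [linkProd]
    · rw [List.cons_append, List.cons_append, linkProd, ← List.cons_append,
        ih (List.cons_ne_nil _ _), List.getLast_cons_cons, linkProd_cons_cons, mul_assoc, mul_assoc,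
        mul_assoc]

theorem ktail_eq_linkProd_mul (ν : Fin D) (x : X) (l : List X) :
    ktail K ν x l = linkProd K (x :: l) * K ((x :: l).getLast (List.cons_ne_nil x l)) ν := by
  induction l generalizing x with
  | nil => simp [ktail, linkProd]
  | cons y l ih => rw [ktail_cons, ih, linkProd, List.getLast_cons_cons, mul_assoc]

theorem ktail_append_cons (ν : Fin D) (x : X) (l : List X) (r : X) (v : List X) :
    ktail K ν x (l ++ r :: v) =
      linkProd K (x :: l) * link K ((x :: l).getLast (List.cons_ne_nil x l)) r * ktail K ν r v := by
  induction l generalizing x with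
  | nil => simp [ktail, linkProd, link]
  | cons y l ih =>
    rw [List.cons_append, ktail_cons, ih, linkProd, List.getLast_cons_cons]
    simp only [mul_assoc]

section Contract

variable {R : Type*} [CommSemiring R] [Algebra R A]

theorem sum_smul_ktail (k : Fin D → R) (x : X) (l : List X) :
    ∑ ρ : Fin D, k ρ • ktail K ρ x l =
      linkProd K (x :: l) * contract K k ((x :: l).getLast (List.cons_ne_nil x l)) := by
  simp only [ktail_eq_linkProd_mul, contract, Finset.mul_sum, mul_smul_comm]

theorem sum_smul_kchain_cons (k : Fin D → R) (μ : Fin D) (x : X) (l : List X) :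
    ∑ ρ : Fin D, k ρ • kchain K μ ρ (x :: l) = K x μ * ∑ ρ : Fin D, k ρ • ktail K ρ x l := by
  simp only [kchain, Finset.mul_sum, mul_smul_comm]

theorem sum_smul_kchain_cons_append_cons (k : Fin D → R) (μ : Fin D) (x : X) (l : List X)
    (r : X) (v : List X) :
    ∑ ρ : Fin D, k ρ • kchain K μ ρ (x :: l ++ r :: v) =
      K x μ * linkProd K (x :: l) * link K ((x :: l).getLast (List.cons_ne_nil x l)) r *
        ∑ ρ : Fin D, k ρ • ktail K ρ r v := by
  simp only [List.cons_append, kchain, ktail_append_cons, Finset.mul_sum, mul_smul_comm, mul_assoc]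

variable {K}

theorem commute_link_left {x y : X} {p : A} (hx : ∀ μ, Commute (K x μ) p)
    (hy : ∀ μ, Commute (K y μ) p) : Commute (link K x y) p :=
  Commute.sum_left _ _ _ fun ρ _ => (hx ρ).mul_left (hy ρ)

theorem commute_contract_left (k : Fin D → R) {x : X} {p : A} (hx : ∀ μ, Commute (K x μ) p) :
    Commute (contract K k x) p :=
  Commute.sum_left _ _ _ fun ρ _ => (hx ρ).smul_left (k ρ)

end Contract

namespace AnticommuteOn

variable {K} {S : List X}

theorem mul_left_anticomm (h : AnticommuteOn K S) {x y : X} (hx : x ∈ S) (hy : y ∈ S) (μ ν : Fin D)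
    (t : A) : K x μ * (K y ν * t) = -(K y ν * (K x μ * t)) := by
  rw [← mul_assoc, h x hx y hy, neg_mul, mul_assoc]

theorem link_skew (h : AnticommuteOn K S) {x y : X} (hx : x ∈ S) (hy : y ∈ S) :
    link K x y = -link K y x := by
  simp only [link, ← Finset.sum_neg_distrib, h x hx y hy]

theorem commute_link (h : AnticommuteOn K S) {z x y : X} (hz : z ∈ S) (hx : x ∈ S)
    (hy : y ∈ S) (μ : Fin D) : Commute (K z μ) (link K x y) := by
  refine Commute.sum_right _ _ _ fun ρ _ => ?_
  rw [Commute, SemiconjBy, mul_left_anticomm h hz hx, ← mul_assoc, mul_assoc (K x ρ), h z hz y hy,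
    mul_neg, neg_neg, mul_assoc]

theorem commute_linkProd (h : AnticommuteOn K S) {z : X} (hz : z ∈ S) (μ : Fin D) :
    ∀ {v : List X}, v ⊆ S → Commute (K z μ) (linkProd K v)
  | [], _ => Commute.one_right _
  | [_], _ => Commute.one_right _
  | x :: y :: l, hv => by
    rw [List.cons_subset] at hv
    exact (commute_link h hz hv.1 (hv.2 List.mem_cons_self) μ).mul_right
      (commute_linkProd h hz μ hv.2)

theorem linkProd_reverse (h : AnticommuteOn K S) :
    ∀ {v : List X}, v ⊆ S → linkProd K v.reverse = (-1) ^ (v.length - 1) * linkProd K v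
  | [], _ => by simp [linkProd]
  | [_], _ => by simp [linkProd]
  | x :: y :: l, hv => by
    rw [List.cons_subset] at hv
    have hy : y ∈ S := hv.2 List.mem_cons_self
    have hlink : Commute (link K x y) (linkProd K (y :: l)) :=
      commute_link_left (fun μ => commute_linkProd h hv.1 μ hv.2)
        (fun μ => commute_linkProd h hy μ hv.2)
    rw [List.reverse_cons, linkProd_append_cons K (by simp), linkProd_reverse h hv.2,
      List.getLast_reverse, List.head_cons, link_skew h hy hv.1, linkProd, mul_one, mul_neg,
      mul_assoc, ← hlink.eq, ← linkProd_cons_cons]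
    simp [pow_succ]

theorem sum_kchain_diag (h : AnticommuteOn K S) {r : X} {v : List X} (hv : r :: v ⊆ S) :
    ∑ σ : Fin D, kchain K σ σ (r :: v) =
      linkProd K (r :: v) * link K r ((r :: v).getLast (List.cons_ne_nil r v)) := by
  have hr : r ∈ S := hv List.mem_cons_self
  simp only [kchain, ktail_eq_linkProd_mul, ← mul_assoc, (commute_linkProd h hr _ hv).eq]
  simp only [mul_assoc, ← Finset.mul_sum, link]

section Contract

variable {R : Type*} [CommSemiring R] [Algebra R A]

theorem sum_smul_ktail_reverse (h : AnticommuteOn K S) (k : Fin D → R) (r : X) {v : List X}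
    (hv : v ⊆ S) (hv₀ : v ≠ []) :
    ∑ ρ : Fin D, k ρ • ktail K ρ r v.reverse =
      link K r (v.getLast hv₀) * ((-1) ^ (v.length - 1) * linkProd K v) *
        contract K k (v.head hv₀) := by
  rw [sum_smul_ktail, linkProd_cons_of_ne_nil K r (List.reverse_ne_nil_iff.mpr hv₀),
    List.head_reverse, h.linkProd_reverse hv, List.getLast_cons (List.reverse_ne_nil_iff.mpr hv₀),
    List.getLast_reverse]

theorem link_mul_link_mul_contract_add (h : AnticommuteOn K S) {a b c r : X} (hb : b ∈ S)
    (hc : c ∈ S) (hr : r ∈ S) (k : Fin D → R)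
    (hk : ∀ μ ν ρ : Fin D,
      k μ • (K r ν * K r ρ) + k ν • (K r ρ * K r μ) + k ρ • (K r μ * K r ν) = 0) :
    link K a r * link K r b * contract K k c + link K a r * link K r c * contract K k b =
      contract K k a * link K r b * link K r c := by
  have term : ∀ σ τ ρ : Fin D,
      K a σ * K r σ * (K r ρ * K b ρ) * (k τ • K c τ)
        + K a σ * K r σ * (K r τ * K c τ) * (k ρ • K b ρ)
        - k σ • K a σ * (K r ρ * K b ρ) * (K r τ * K c τ) = 0 := by
    intro σ τ ρ
    have hbianchi := congrArg (fun t => K a σ * t * (K b ρ * K c τ)) (hk τ σ ρ)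
    simp only [mul_add, add_mul, smul_mul_assoc, mul_smul_comm, mul_assoc, mul_zero,
      zero_mul] at hbianchi ⊢
    rw [h c hc b hb, mul_left_anticomm h hb hr, mul_left_anticomm h hr hr σ τ]
    simp only [mul_neg, smul_neg, neg_neg, ← hbianchi]
    abel
  rw [← sub_eq_zero]
  simp only [link, contract, Finset.sum_mul, Finset.mul_sum]
  rw [Finset.sum_comm (f := fun ρ τ => ∑ σ, K a σ * K r σ * (K r τ * K c τ) * (k ρ • K b ρ))]
  simp only [← Finset.sum_add_distrib, ← Finset.sum_sub_distrib, term, Finset.sum_const_zero]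

theorem link_mul_link_mul_contract_add_of_commute (h : AnticommuteOn K S) {a b c r : X}
    (hb : b ∈ S) (hc : c ∈ S) (hr : r ∈ S) (k : Fin D → R)
    (hk : ∀ μ ν ρ : Fin D,
      k μ • (K r ν * K r ρ) + k ν • (K r ρ * K r μ) + k ρ • (K r μ * K r ν) = 0)
    {p : A} (hp : ∀ z ∈ S, ∀ μ, Commute (K z μ) p) :
    link K a r * (link K r b * p * contract K k c + link K r c * p * contract K k b) =
      contract K k a * (link K r b * p * link K r c) := by
  have hpc := (commute_contract_left k (hp c hc)).eq.symm
  have hpb := (commute_contract_left k (hp b hb)).eq.symm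
  have hpl := (commute_link_left (hp r hr) (hp c hc)).eq.symm
  rw [mul_add, mul_assoc _ p, hpc, mul_assoc _ p, hpb, mul_assoc _ p, hpl]
  simp only [← mul_assoc, ← add_mul, link_mul_link_mul_contract_add h hb hc hr k hk]

end Contract

end AnticommuteOn

end KChain

open KChain

theorem kchain_singly_linked_antisymmetrization_general (A X : Type*) [Ring A] [Algebra ℂ A]
    (D : ℕ) (K : X → Fin D → A)
    (ts us : List X) (r : X) (hts : ts ≠ []) (hus : us ≠ [])
    (hanti : ∀ x ∈ ts ++ r :: us, ∀ y ∈ ts ++ r :: us, ∀ μ ν : Fin D,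
      K x μ * K y ν = -(K y ν * K x μ))
    (kr : Fin D → ℂ)
    (hbianchi : ∀ μ ν ρ : Fin D,
      kr μ • (K r ν * K r ρ) + kr ν • (K r ρ * K r μ) + kr ρ • (K r μ * K r ν) = 0) :
    ∀ μ : Fin D,
      (∑ ρ : Fin D, kr ρ • kchain K μ ρ (ts ++ r :: us))
        - ((-1 : ℂ) ^ us.length) • (∑ ρ : Fin D, kr ρ • kchain K μ ρ (ts ++ r :: us.reverse))
      = (∑ ρ : Fin D, kr ρ • kchain K μ ρ ts)
          * (∑ σ : Fin D, kchain K σ σ (r :: us)) := by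
  intro μ
  obtain ⟨t, ts, rfl⟩ := List.exists_cons_of_ne_nil hts
  obtain ⟨b, us, rfl⟩ := List.exists_cons_of_ne_nil hus
  have h : AnticommuteOn K (t :: ts ++ r :: b :: us) := hanti
  have hru : r :: b :: us ⊆ t :: ts ++ r :: b :: us := List.subset_append_right _ _
  have hu : b :: us ⊆ t :: ts ++ r :: b :: us := List.Subset.trans (List.subset_cons_self _ _) hru
  have hsign : ∀ x y z w : A, (-1 : ℂ) ^ (us.length + 1) • (x * (y * ((-1) ^ us.length * z) * w)) =
      -(x * (y * z * w)) := by
    intro x y z w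
    rcases neg_one_pow_eq_or A us.length with hn | hn <;> simp [Algebra.smul_def, pow_succ, hn]
  rw [sum_smul_kchain_cons_append_cons, sum_smul_kchain_cons_append_cons, sum_smul_kchain_cons,
    h.sum_smul_ktail_reverse kr r hu (List.cons_ne_nil b us), sum_smul_ktail, sum_smul_ktail,
    h.sum_kchain_diag hru, linkProd_cons_cons, List.getLast_cons_cons, List.head_cons]
  rw [List.length_cons, Nat.add_sub_cancel, hsign, sub_neg_eq_add, ← mul_add, mul_assoc (K t μ * _),
    h.link_mul_link_mul_contract_add_of_commute (hu List.mem_cons_self)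
      (hu (List.getLast_mem _)) (hru List.mem_cons_self) kr hbianchi
      fun z hz ν => h.commute_linkProd hz ν hu]
  simp only [mul_assoc]

/-- antisymmetrization identity for the singly linked chain:
`∑_ρ K^{μρ}_{[t₁⋯tₘ r u₁⋯u_ℓ]} k_r^ρ − (−1)^ℓ ∑_ρ K^{μρ}_{[t₁⋯tₘ r u_ℓ⋯u₁]} k_r^ρ
 = (∑_ρ K^{μρ}_{[t₁⋯tₘ]} k_r^ρ) (∑_σ K^{σσ}_{[r u₁⋯u_ℓ]})`. -/
theorem kchain_singly_linked_antisymmetrization (A X : Type*) [Ring A] [Algebra ℂ A]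
    (D : ℕ) (hD : 1 ≤ D) (K : X → Fin D → A)
    (ts us : List X) (r : X) (hts : ts ≠ []) (hus : us ≠ [])
    (hanti : ∀ x ∈ ts ++ r :: us, ∀ y ∈ ts ++ r :: us, ∀ μ ν : Fin D,
      K x μ * K y ν = -(K y ν * K x μ))
    (kr : Fin D → ℂ)
    (hbianchi : ∀ μ ν ρ : Fin D,
      kr μ • (K r ν * K r ρ) + kr ν • (K r ρ * K r μ) + kr ρ • (K r μ * K r ν) = 0) :
    ∀ μ : Fin D,
      (∑ ρ : Fin D, kr ρ • kchain K μ ρ (ts ++ r :: us))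
        - ((-1 : ℂ) ^ us.length) • (∑ ρ : Fin D, kr ρ • kchain K μ ρ (ts ++ r :: us.reverse))
      = (∑ ρ : Fin D, kr ρ • kchain K μ ρ ts)
          * (∑ σ : Fin D, kchain K σ σ (r :: us)) :=
  kchain_singly_linked_antisymmetrization_general A X D K ts us r hts hus hanti kr hbianchi
end

section
/- Let U ⊆ ℂ be open and let ω₀, ω₊, χ : U → ℂ be continuously differentiable functions satisfying the two superholomorphicity equations for weight n = 1/2: ∂ω₀/∂z̄ + ½ χ ω₊ = 0 and ∂ω₊/∂z̄ + ½ χ ∂ω₀/∂z + ½ (∂χ/∂z) ω₀ = 0 on U. Then the 1-form ω₊ dz − ½ χ ω₀ dz̄ is closed on U, i.e. ∂/∂z̄ (ω₊) + ½ ∂/∂z (χ ω₀) = 0. -/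
/-- The Wirtinger derivative `∂f/∂z = ½(∂ₓf − i ∂_y f)` of `f : ℂ → ℂ`. -/
noncomputable def wderZ (f : ℂ → ℂ) (z : ℂ) : ℂ :=
  (1 / 2 : ℂ) * (fderiv ℝ f z 1 - Complex.I * fderiv ℝ f z Complex.I)

/-- The Wirtinger derivative `∂f/∂z̄ = ½(∂ₓf + i ∂_y f)`. -/
noncomputable def wderZbar (f : ℂ → ℂ) (z : ℂ) : ℂ :=
  (1 / 2 : ℂ) * (fderiv ℝ f z 1 + Complex.I * fderiv ℝ f z Complex.I)

theorem wderZ_mul {f g : ℂ → ℂ} {z : ℂ} (hf : DifferentiableAt ℝ f z)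
    (hg : DifferentiableAt ℝ g z) :
    wderZ (fun w => f w * g w) z = wderZ f z * g z + f z * wderZ g z := by
  simp only [wderZ, fderiv_fun_mul hf hg, add_apply, smul_apply, smul_eq_mul]
  ring

theorem superholomorphic_half_form_closed_general
    (U : Set ℂ) (hU : IsOpen U) (ω₀ ωp χ : ℂ → ℂ)
    (hω₀ : ContDiffOn ℝ 1 ω₀ U)
    (hχ : ContDiffOn ℝ 1 χ U)
    (heq2 : ∀ z ∈ U, wderZbar ωp z + (1 / 2 : ℂ) * (χ z * wderZ ω₀ z)
        + (1 / 2 : ℂ) * (wderZ χ z * ω₀ z) = 0) :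
    ∀ z ∈ U, wderZbar ωp z + (1 / 2 : ℂ) * wderZ (fun w => χ w * ω₀ w) z = 0 := by
  intro z hz
  have hχz : DifferentiableAt ℝ χ z :=
    (hχ.contDiffAt (hU.mem_nhds hz)).differentiableAt one_ne_zero
  have hω₀z : DifferentiableAt ℝ ω₀ z :=
    (hω₀.contDiffAt (hU.mem_nhds hz)).differentiableAt one_ne_zero
  rw [wderZ_mul hχz hω₀z]
  linear_combination heq2 z hz

/-- if `(ω₀, ω₊)` satisfy the superholomorphicity equations for
weight `n = ½` with gravitino slice `χ`, then the 1-form `ω₊ dz − ½ χ ω₀ dz̄` is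
closed: `∂_z̄ ω₊ + ½ ∂_z (χ ω₀) = 0`. -/
theorem superholomorphic_half_form_closed
    (U : Set ℂ) (hU : IsOpen U) (ω₀ ωp χ : ℂ → ℂ)
    (hω₀ : ContDiffOn ℝ 1 ω₀ U) (hωp : ContDiffOn ℝ 1 ωp U)
    (hχ : ContDiffOn ℝ 1 χ U)
    (heq1 : ∀ z ∈ U, wderZbar ω₀ z + (1 / 2 : ℂ) * (χ z * ωp z) = 0)
    (heq2 : ∀ z ∈ U, wderZbar ωp z + (1 / 2 : ℂ) * (χ z * wderZ ω₀ z)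
        + (1 / 2 : ℂ) * (wderZ χ z * ω₀ z) = 0) :
    ∀ z ∈ U, wderZbar ωp z + (1 / 2 : ℂ) * wderZ (fun w => χ w * ω₀ w) z = 0 :=
  superholomorphic_half_form_closed_general U hU ω₀ ωp χ hω₀ hχ heq2
end
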